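/- (MPCC solutions need not solve the bilevel problem.) Consider the bilevel problem: minimize (x−1)² + y² over x ∈ ℝ and y minimizing x²·y over {y ∈ ℝ : y² ≤ 0}. Then: (i) for every x, the lower-level feasible set {y : y² ≤ 0} equals {0}, so the unique optimal solution of the bilevel problem is (x,y) = (1,0); (ii) the feasible set of its MPCC reformulation — triples (x,y,μ) with x² + 2μy = 0, μy² = 0, y² ≤ 0, μ ≥ 0 — equals {(0,0,μ) : μ ≥ 0}; consequently every optimal solution of the MPCC has (x,y) = (0,0), which is not an optimal solution of the bilevel problem. -/

import Mathlib

/-!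
The lower-level constraint `y² ≤ 0` cuts out the single point `y = 0`, so the bilevel problem
is just `min (x - 1)²` and is solved by `(1, 0)`. The constraint violates every constraint
qualification at `y = 0`, however: its gradient `2y` vanishes there, so the KKT stationarity
equation `x² + 2μy = 0` degenerates to `x² = 0`, and the MPCC reformulation loses every
upper-level point except `x = 0`.
-/

/-- Feasibility for the bilevel problem of Example `BP vs MPCC II`: `y` minimizes `x²·y` over
`{y : y² ≤ 0}`. -/
def BP2Feasible (x y : ℝ) : Prop :=
  y ^ 2 ≤ 0 ∧ ∀ y' : ℝ, y' ^ 2 ≤ 0 → x ^ 2 * y ≤ x ^ 2 * y'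

/-- Optimality for the bilevel problem: feasibility plus minimality of `(x−1)² + y²`. -/
def BP2Optimal (x y : ℝ) : Prop :=
  BP2Feasible x y ∧
  ∀ x' y' : ℝ, BP2Feasible x' y' → (x - 1) ^ 2 + y ^ 2 ≤ (x' - 1) ^ 2 + y' ^ 2

/-- Feasibility for the MPCC reformulation, in variables `(x, y, μ)`. -/
def MPCC2Feasible (x y μ : ℝ) : Prop :=
  x ^ 2 + 2 * μ * y = 0 ∧ μ * y ^ 2 = 0 ∧ y ^ 2 ≤ 0 ∧ 0 ≤ μ

theorem setOf_sq_nonpos_eq_singleton_zero {R : Type*} [Ring R] [LinearOrder R]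
    [IsStrictOrderedRing R] : {y : R | y ^ 2 ≤ 0} = {0} := by
  ext y
  simp

theorem BP2Feasible_iff (x y : ℝ) : BP2Feasible x y ↔ y = 0 := by
  simp only [BP2Feasible, sq_nonpos_iff, forall_eq, and_iff_left_iff_imp]
  rintro rfl
  rfl

theorem BP2Optimal_iff (x y : ℝ) : BP2Optimal x y ↔ x = 1 ∧ y = 0 := by
  constructor
  · rintro ⟨hfeas, hmin⟩
    obtain rfl := (BP2Feasible_iff x y).1 hfeas
    have hle := hmin 1 0 ((BP2Feasible_iff 1 0).2 rfl)
    norm_num [sub_eq_zero] at hle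
    exact ⟨hle, rfl⟩
  · rintro ⟨rfl, rfl⟩
    refine ⟨(BP2Feasible_iff 1 0).2 rfl, fun x' y' _ => ?_⟩
    norm_num
    positivity

theorem MPCC2Feasible_iff (x y μ : ℝ) : MPCC2Feasible x y μ ↔ x = 0 ∧ y = 0 ∧ 0 ≤ μ := by
  simp only [MPCC2Feasible, sq_nonpos_iff]
  constructor
  · rintro ⟨hstat, -, rfl, hμ⟩
    simpa [hμ] using hstat
  · rintro ⟨rfl, rfl, hμ⟩
    simp [hμ]

/-- MPCC solutions need not solve the bilevel problem: (i) the lower-level feasible set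
`{y : y² ≤ 0}` is `{0}` and the unique optimal solution of the bilevel problem is `(1, 0)`;
(ii) the MPCC feasible set is `{(0, 0, μ) : μ ≥ 0}`, so every optimal solution of the MPCC
has `(x, y) = (0, 0)`, which is not optimal for the bilevel problem. -/
theorem MPCC_solutions_not_bilevel :
    ({y : ℝ | y ^ 2 ≤ 0} = {0}) ∧
    BP2Optimal 1 0 ∧
    (∀ x y : ℝ, BP2Optimal x y → x = 1 ∧ y = 0) ∧
    ({t : ℝ × ℝ × ℝ | MPCC2Feasible t.1 t.2.1 t.2.2} =
      {t : ℝ × ℝ × ℝ | t.1 = 0 ∧ t.2.1 = 0 ∧ 0 ≤ t.2.2}) ∧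
    (∀ x y μ : ℝ, MPCC2Feasible x y μ →
      (∀ x' y' μ' : ℝ, MPCC2Feasible x' y' μ' →
        (x - 1) ^ 2 + y ^ 2 ≤ (x' - 1) ^ 2 + y' ^ 2) →
      x = 0 ∧ y = 0) ∧
    ¬ BP2Optimal 0 0 := by
  refine ⟨setOf_sq_nonpos_eq_singleton_zero, (BP2Optimal_iff 1 0).2 ⟨rfl, rfl⟩,
    fun x y => (BP2Optimal_iff x y).1, ?_, ?_, ?_⟩
  · ext ⟨x, y, μ⟩
    exact MPCC2Feasible_iff x y μ
  · intro x y μ hfeas _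
    obtain ⟨hx, hy, -⟩ := (MPCC2Feasible_iff x y μ).1 hfeas
    exact ⟨hx, hy⟩
  · rw [BP2Optimal_iff]
    norm_num
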